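/- Run OGD with non-increasing learning rates η_t satisfying α/M ≤ η_t ≤ 2(L_t(W_t) − e_t)/‖G_t‖_F², where e_t = E_{ŷ∼π(θ_t)}[ℓ(ŷ, y_t)] denotes the expected target loss at round t. Then for any comparator sequence U_1,…,U_T in a convex set of diameter D, Σ_{t=1}^T e_t ≤ Σ_{t=1}^T L_t(U_t) + (MD/α)(D/2 + P_T), where P_T = Σ_{t=2}^T ‖U_t − U_{t−1}‖_F. -/

import Mathlib

/-!
The projection step and the subgradient inequality give, in every round,
`2η_t (L_t(W_t) - L_t(U_t)) ≤ ‖W_t - U_t‖² - ‖W_{t+1} - U_t‖² + η_t² ‖G_t‖²`, and the upper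
learning-rate bound turns `η_t² ‖G_t‖²` into `2η_t (L_t(W_t) - e_t)`, so that
`e_t - L_t(U_t) ≤ (‖W_t - U_t‖² - ‖W_{t+1} - U_t‖²) / (2η_t)`. The weights `1/(2η_t)` increase,
so the sum of the right-hand sides telescopes up to the comparator drift
`‖W_{t+1} - U_{t+1}‖² ≤ ‖W_{t+1} - U_t‖² + 2D ‖U_{t+1} - U_t‖`, which leaves at most
`(D² + 2D P_T) / (2η_T)`; the lower learning-rate bound gives `1/(2η_T) ≤ M/(2α)`.
-/

open RealInnerProductSpace Finset

section ProjectedStep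

variable {E : Type*} [NormedAddCommGroup E] [InnerProductSpace ℝ E] {K : Set E}

lemma norm_sub_sq_le_of_isMinOn_norm_sub (hK : Convex ℝ K) {p y u : E} (hp : p ∈ K)
    (hmin : IsMinOn (fun w => ‖w - y‖) K p) (hu : u ∈ K) :
    ‖p - u‖ ^ 2 ≤ ‖y - u‖ ^ 2 := by
  have : Nonempty K := ⟨⟨p, hp⟩⟩
  have hinf : ‖y - p‖ = ⨅ w : K, ‖y - w‖ := by
    have hbdd : BddBelow (Set.range fun w : K => ‖y - w‖) := ⟨0, by
      rintro _ ⟨w, rfl⟩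
      exact norm_nonneg _⟩
    refine le_antisymm (le_ciInf fun w => ?_) (ciInf_le hbdd ⟨p, hp⟩)
    simpa only [norm_sub_rev y] using isMinOn_iff.1 hmin w w.2
  have hobtuse : ⟪y - p, u - p⟫ ≤ 0 := (norm_eq_iInf_iff_real_inner_le_zero hK hp).1 hinf u hu
  have hexpand : ‖y - u‖ ^ 2 = ‖y - p‖ ^ 2 - 2 * ⟪y - p, u - p⟫ + ‖u - p‖ ^ 2 := by
    rw [← norm_sub_sq_real, sub_sub_sub_cancel_right]
  rw [norm_sub_rev p u, hexpand]
  nlinarith [sq_nonneg ‖y - p‖]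

lemma two_mul_inner_le_of_isMinOn_norm_sub (hK : Convex ℝ K) {w w' g u : E} (η : ℝ)
    (hw' : w' ∈ K) (hproj : IsMinOn (fun v => ‖v - (w - η • g)‖) K w') (hu : u ∈ K) :
    2 * η * ⟪g, w - u⟫ ≤ ‖w - u‖ ^ 2 - ‖w' - u‖ ^ 2 + η ^ 2 * ‖g‖ ^ 2 := by
  have hexpand :
      ‖w - η • g - u‖ ^ 2 = ‖w - u‖ ^ 2 - 2 * η * ⟪g, w - u⟫ + η ^ 2 * ‖g‖ ^ 2 := by
    rw [sub_right_comm, norm_sub_sq_real, real_inner_smul_right, norm_smul, mul_pow,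
      Real.norm_eq_abs, sq_abs, real_inner_comm]
    ring
  linarith [norm_sub_sq_le_of_isMinOn_norm_sub hK hw' hproj hu]

lemma sub_le_mul_inv_of_isMinOn_norm_sub (hK : Convex ℝ K) {f : E → ℝ} {w w' g u : E}
    {η e : ℝ} (hη : 0 < η) (hw' : w' ∈ K)
    (hproj : IsMinOn (fun v => ‖v - (w - η • g)‖) K w') (hu : u ∈ K)
    (hsub : f w + ⟪g, u - w⟫ ≤ f u) (hstep : η * ‖g‖ ^ 2 ≤ 2 * (f w - e)) :
    e - f u ≤ (‖w - u‖ ^ 2 - ‖w' - u‖ ^ 2) * (2 * η)⁻¹ := by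
  have hinner : ⟪g, u - w⟫ = -⟪g, w - u⟫ := by rw [← inner_neg_right, neg_sub]
  have hregret : 2 * η * (e - f u) ≤ ‖w - u‖ ^ 2 - ‖w' - u‖ ^ 2 := by
    nlinarith [two_mul_inner_le_of_isMinOn_norm_sub hK η hw' hproj hu]
  rwa [le_mul_inv_iff₀ (by positivity), mul_comm]

end ProjectedStep

lemma norm_sub_sq_le_norm_sub_sq_add {E : Type*} [SeminormedAddCommGroup E] {x u v : E} {D : ℝ}
    (hu : ‖x - u‖ ≤ D) (hv : ‖x - v‖ ≤ D) :
    ‖x - u‖ ^ 2 ≤ ‖x - v‖ ^ 2 + 2 * D * ‖u - v‖ := by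
  have hdiff : ‖x - u‖ - ‖x - v‖ ≤ ‖u - v‖ := by
    simpa only [sub_sub_sub_cancel_left, norm_sub_rev v] using norm_sub_norm_le (x - u) (x - v)
  have hsum : 0 ≤ ‖x - u‖ + ‖x - v‖ := by positivity
  nlinarith [mul_le_mul_of_nonneg_right hdiff hsum, norm_nonneg (u - v)]

lemma sum_range_sub_mul_le {b c p β : ℕ → ℝ} {R : ℝ}
    (hβ : Monotone β) (hβ0 : 0 ≤ β 0) (hb0 : b 0 ≤ R) (hc : ∀ t, 0 ≤ c t ∧ c t ≤ R)
    (hp : ∀ t, 0 ≤ p t) (hbc : ∀ t, b (t + 1) ≤ c t + p t) (T : ℕ) :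
    ∑ t ∈ range T, (b t - c t) * β t ≤ β (T - 1) * (R + ∑ t ∈ range (T - 1), p t) := by
  -- carrying `c N * β N` makes the bound inductive; it is dropped at the end since `c ≥ 0`
  have hinv : ∀ N, ∑ t ∈ range (N + 1), (b t - c t) * β t + c N * β N
      ≤ β N * (R + ∑ t ∈ range N, p t) := by
    intro N
    induction N with
    | zero =>
      simp only [zero_add, sum_range_one, range_zero, sum_empty, add_zero]
      linarith [mul_le_mul_of_nonneg_right hb0 hβ0]
    | succ N ih =>
      rw [sum_range_succ _ (N + 1), sum_range_succ p N]
      have hβN : β N ≤ β (N + 1) := hβ N.le_succ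
      have hslack : 0 ≤ R + ∑ t ∈ range N, p t - c N := by
        linarith [(hc N).2, sum_nonneg fun t (_ : t ∈ range N) => hp t]
      nlinarith [mul_le_mul_of_nonneg_right (hbc N) (hβ0.trans (hβ (Nat.zero_le (N + 1)))),
        mul_nonneg (sub_nonneg.2 hβN) hslack]
  rcases T with _ | N
  · simpa using mul_nonneg hβ0 ((hc 0).1.trans (hc 0).2)
  · have hcN : 0 ≤ c N * β N := mul_nonneg (hc N).1 (hβ0.trans (hβ (Nat.zero_le N)))
    simpa using (le_add_of_nonneg_right hcN).trans (hinv N)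

theorem small_surrogate_loss_path_length_bound_general {d n T : ℕ}
    (Wset : Set (EuclideanSpace ℝ (Fin d × Fin n))) (D : ℝ)
    (hconv : Convex ℝ Wset)
    (hdiam : ∀ w ∈ Wset, ∀ w' ∈ Wset, ‖w - w'‖ ≤ D)
    (L : ℕ → EuclideanSpace ℝ (Fin d × Fin n) → ℝ)
    (α M : ℝ) (hα : 0 < α) (hM : 0 < M)
    (η : ℕ → ℝ) (hηmono : ∀ s t, s ≤ t → η t ≤ η s)
    (W G : ℕ → EuclideanSpace ℝ (Fin d × Fin n))
    (hWmem : ∀ t, W t ∈ Wset)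
    -- G t is a subgradient of L t at W t
    (hsub : ∀ t, ∀ u ∈ Wset, L t (W t) + (inner ℝ (G t) (u - W t) : ℝ) ≤ L t u)
    -- OGD projection step
    (hproj : ∀ t, ∀ u ∈ Wset,
      ‖W (t + 1) - (W t - η t • G t)‖ ≤ ‖u - (W t - η t • G t)‖)
    -- e t : expected target loss at round t
    (e : ℕ → ℝ)
    -- learning-rate range
    (hηlow : ∀ t, α / M ≤ η t)
    (hηhigh : ∀ t, η t * ‖G t‖ ^ 2 ≤ 2 * (L t (W t) - e t))
    (U : ℕ → EuclideanSpace ℝ (Fin d × Fin n)) (hU : ∀ t, U t ∈ Wset) :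
    ∑ t ∈ Finset.range T, e t ≤
      ∑ t ∈ Finset.range T, L t (U t)
        + M * D / α * (D / 2 + ∑ t ∈ Finset.range (T - 1), ‖U (t + 1) - U t‖) := by
  have hD : 0 ≤ D := (norm_nonneg _).trans (hdiam _ (hWmem 0) _ (hWmem 0))
  have hdiam_sq : ∀ t s, ‖W t - U s‖ ^ 2 ≤ D ^ 2 := fun t s =>
    pow_le_pow_left₀ (norm_nonneg _) (hdiam _ (hWmem t) _ (hU s)) 2
  have hη : ∀ t, 0 < η t := fun t => (div_pos hα hM).trans_le (hηlow t)
  set β : ℕ → ℝ := fun t => (2 * η t)⁻¹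
  have hβ : Monotone β := fun s t hst =>
    inv_anti₀ (by linarith [hη t]) (by linarith [hηmono s t hst])
  have hβle : β (T - 1) ≤ M / (2 * α) :=
    calc β (T - 1) ≤ (2 * (α / M))⁻¹ :=
          inv_anti₀ (by positivity) (by linarith [hηlow (T - 1)])
      _ = M / (2 * α) := by field_simp
  have htelescope := sum_range_sub_mul_le (b := fun t => ‖W t - U t‖ ^ 2)
    (c := fun t => ‖W (t + 1) - U t‖ ^ 2) (p := fun t => 2 * D * ‖U (t + 1) - U t‖) hβ
    (inv_nonneg.2 (by linarith [hη 0])) (hdiam_sq 0 0) (fun t => ⟨by positivity, hdiam_sq _ _⟩)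
    (fun t => by positivity) (fun t => norm_sub_sq_le_norm_sub_sq_add
      (hdiam _ (hWmem (t + 1)) _ (hU (t + 1))) (hdiam _ (hWmem (t + 1)) _ (hU t))) T
  have hrounds : ∑ t ∈ range T, e t ≤ ∑ t ∈ range T, L t (U t) +
      ∑ t ∈ range T, (‖W t - U t‖ ^ 2 - ‖W (t + 1) - U t‖ ^ 2) * β t := by
    rw [← sum_add_distrib]
    refine sum_le_sum fun t _ => sub_le_iff_le_add'.1 ?_
    exact sub_le_mul_inv_of_isMinOn_norm_sub hconv (hη t) (hWmem (t + 1))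
      (isMinOn_iff.2 (hproj t)) (hU t) (hsub t (U t) (hU t)) (hηhigh t)
  have hrate : β (T - 1) * (D ^ 2 + ∑ t ∈ range (T - 1), 2 * D * ‖U (t + 1) - U t‖)
      ≤ M * D / α * (D / 2 + ∑ t ∈ range (T - 1), ‖U (t + 1) - U t‖) := by
    calc _ ≤ M / (2 * α) * (D ^ 2 + ∑ t ∈ range (T - 1), 2 * D * ‖U (t + 1) - U t‖) := by
          gcongr
      _ = _ := by
          rw [← mul_sum]
          field_simp
  linarith

/-- Theorem 1 ("small-surrogate-loss + path-length" bound via the surrogate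
gap): running OGD with non-increasing learning rates in the range
`[α/M, 2(L_t(W_t) − e_t)/‖G_t‖²]` on convex non-negative surrogate losses
satisfying the surrogate-gap and self-bounding conditions yields
`Σ e_t ≤ Σ L_t(U_t) + (MD/α)(D/2 + P_T)` for any comparator sequence. -/
theorem small_surrogate_loss_path_length_bound {d n T : ℕ} (hT : 0 < T)
    (Wset : Set (EuclideanSpace ℝ (Fin d × Fin n))) (D : ℝ)
    (hclosed : IsClosed Wset) (hconv : Convex ℝ Wset)
    (hdiam : ∀ w ∈ Wset, ∀ w' ∈ Wset, ‖w - w'‖ ≤ D)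
    (L : ℕ → EuclideanSpace ℝ (Fin d × Fin n) → ℝ)
    (hLconv : ∀ t, ConvexOn ℝ Wset (L t))
    (hLnonneg : ∀ t w, 0 ≤ L t w)
    (α M : ℝ) (hα : 0 < α) (hα1 : α < 1) (hM : 0 < M)
    (η : ℕ → ℝ) (hηmono : ∀ s t, s ≤ t → η t ≤ η s)
    (W G : ℕ → EuclideanSpace ℝ (Fin d × Fin n))
    (hWmem : ∀ t, W t ∈ Wset)
    -- G t is a subgradient of L t at W t
    (hsub : ∀ t, ∀ u ∈ Wset, L t (W t) + (inner ℝ (G t) (u - W t) : ℝ) ≤ L t u)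
    -- OGD projection step
    (hproj : ∀ t, ∀ u ∈ Wset,
      ‖W (t + 1) - (W t - η t • G t)‖ ≤ ‖u - (W t - η t • G t)‖)
    -- e t : expected target loss at round t
    (e : ℕ → ℝ) (henonneg : ∀ t, 0 ≤ e t)
    -- surrogate-gap condition
    (hgap : ∀ t, e t ≤ (1 - α) * L t (W t))
    -- self-bounding property
    (hsb : ∀ t, ‖G t‖ ^ 2 ≤ 2 * M * L t (W t))
    -- learning-rate range
    (hηlow : ∀ t, α / M ≤ η t)
    (hηhigh : ∀ t, η t * ‖G t‖ ^ 2 ≤ 2 * (L t (W t) - e t))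
    (U : ℕ → EuclideanSpace ℝ (Fin d × Fin n)) (hU : ∀ t, U t ∈ Wset) :
    ∑ t ∈ Finset.range T, e t ≤
      ∑ t ∈ Finset.range T, L t (U t)
        + M * D / α * (D / 2 + ∑ t ∈ Finset.range (T - 1), ‖U (t + 1) - U t‖) :=
  small_surrogate_loss_path_length_bound_general Wset D hconv hdiam L α M hα hM η hηmono W G hWmem
    hsub hproj e hηlow hηhigh U hU
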